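/- arXiv:0801.3373 — 7 statements merged into one kernel-verified Lean document; each statement's English description precedes it below -/
import Mathlib

section
/- Let R = K[x_1,...,x_n] be a polynomial ring over a field K with maximal graded ideal M = (x_1,...,x_n), let ℓ be a nonzero linear form, I a homogeneous ideal, S = R[M/ℓ] the quadratic extension, and J = IS ∩ R. Then J equals the union over k ∈ ℕ of the ideals (I·M^k : ℓ^k). -/
/-!
`A[M/ℓ]` is the union of the `M^k/ℓ^k`, so `I·A[M/ℓ]` is the union of the `I M^k/ℓ^k`.
An element `x` of `A` lies there iff `x = y/ℓ^k` in `A_ℓ` with `y ∈ I M^k`, i.e.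
`ℓ^j x ℓ^k = ℓ^j y` for some `j`; as `ℓ ∈ M`, the extra factor `ℓ^j` is absorbed into
`I M^(k+j)`, giving `x ∈ (I M^(k+j) : ℓ^(k+j))`.
-/

open MvPolynomial

noncomputable section

/-- The polynomial ring `R = K[x_1,…,x_n]`. -/
abbrev Rn (K : Type) [Field K] (n : ℕ) : Type := MvPolynomial (Fin n) K

/-- The irrelevant maximal ideal `M = (x_1,…,x_n)`. -/
def Mi (K : Type) [Field K] (n : ℕ) : Ideal (Rn K n) :=
  Ideal.span (Set.range (X : Fin n → Rn K n))

variable {K : Type} [Field K] {n : ℕ}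

/-- `I` is a homogeneous ideal. -/
def IsHomog (I : Ideal (Rn K n)) : Prop :=
  ∀ f ∈ I, ∀ j : ℕ, homogeneousComponent j f ∈ I

/-- `I_⟨j⟩`, the ideal generated by the degree-`j` forms in `I`. -/
def comp (I : Ideal (Rn K n)) (j : ℕ) : Ideal (Rn K n) :=
  Ideal.span {f | f ∈ I ∧ f.IsHomogeneous j}

/-- The saturation `I^sat = I : M^∞`. -/
def sat (I : Ideal (Rn K n)) : Ideal (Rn K n) :=
  ⨆ k : ℕ, I.colon ((Mi K n ^ k : Ideal (Rn K n)) : Set (Rn K n))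

/-- `I : g^∞`. -/
def colonInfty (I : Ideal (Rn K n)) (g : Rn K n) : Ideal (Rn K n) :=
  ⨆ k : ℕ, I.colon (Ideal.span {g ^ k})

/-- The initial degree (order) `o(I)` of a homogeneous ideal. -/
def order (I : Ideal (Rn K n)) : ℕ :=
  sInf {j | ∃ f ∈ I, f ≠ 0 ∧ f.IsHomogeneous j}

/-- The quadratic extension `S = R[M/ℓ] = ∪_k M^k/ℓ^k ⊆ R_ℓ`. -/
def quadExt (ℓ : Rn K n) : Subalgebra (Rn K n) (Localization.Away ℓ) :=
  Algebra.adjoin (Rn K n)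
    {x | ∃ m ∈ Mi K n,
      x * algebraMap (Rn K n) (Localization.Away ℓ) ℓ =
        algebraMap (Rn K n) (Localization.Away ℓ) m}

/-- The contraction `IS ∩ R` of `I` from `S = R[M/ℓ]`. -/
def contraction (I : Ideal (Rn K n)) (ℓ : Rn K n) : Ideal (Rn K n) :=
  Ideal.comap (algebraMap (Rn K n) (quadExt ℓ))
    (Ideal.map (algebraMap (Rn K n) (quadExt ℓ)) I)

/-- `I` is contracted (from a quadratic extension). -/
def IsContracted (I : Ideal (Rn K n)) : Prop :=
  ∃ ℓ : Rn K n, ℓ ≠ 0 ∧ ℓ.IsHomogeneous 1 ∧ I = contraction I ℓ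

/-- `I` is `M`-full. -/
def IsMFull (I : Ideal (Rn K n)) : Prop :=
  ∃ ℓ : Rn K n, ℓ ≠ 0 ∧ ℓ.IsHomogeneous 1 ∧ (I * Mi K n).colon (Ideal.span {ℓ}) = I

/-- The minimal number of generators `μ(I)`. -/
def mu (I : Ideal (Rn K n)) : ℕ :=
  sInf {k | ∃ s : Finset (Rn K n), s.card = k ∧ Ideal.span (s : Set (Rn K n)) = I}

/-- The integral closure of an ideal, as a set: elements satisfying an equation
`a^t + r_1 a^{t-1} + … + r_t = 0` with `r_i ∈ I^i`. -/
def intClo {A : Type} [CommRing A] (I : Ideal A) : Set A :=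
  {a | ∃ (t : ℕ) (r : ℕ → A), 0 < t ∧ (∀ i, 1 ≤ i → i ≤ t → r i ∈ I ^ i) ∧
    a ^ t + ∑ i ∈ Finset.Icc 1 t, r i * a ^ (t - i) = 0}

/-- `I` is integrally closed. -/
def IsIC {A : Type} [CommRing A] (I : Ideal A) : Prop :=
  ∀ a ∈ intClo I, a ∈ I

/-- The class `C`: finite-colength homogeneous ideals with `I + (ℓ) = M^{o(I)} + (ℓ)`
for some nonzero linear form `ℓ`, which are contracted. -/
def InC (I : Ideal (Rn K n)) : Prop :=
  IsHomog I ∧ (∃ m : ℕ, Mi K n ^ m ≤ I) ∧ IsContracted I ∧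
    ∃ ℓ : Rn K n, ℓ ≠ 0 ∧ ℓ.IsHomogeneous 1 ∧
      I + Ideal.span {ℓ} = Mi K n ^ order I + Ideal.span {ℓ}

/-- `(b, dg, φ, π)` is a graded free resolution of the homogeneous ideal `J`:
the `i`-th free module has basis `Fin (b i)` with generators in degrees `dg i`,
the maps are given by matrices with homogeneous entries of the appropriate degrees,
and the complex is exact. -/
def IsGradedRes (J : Ideal (Rn K n)) (b : ℕ → ℕ) (dg : (i : ℕ) → Fin (b i) → ℕ)
    (φ : (i : ℕ) → Matrix (Fin (b i)) (Fin (b (i + 1))) (Rn K n))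
    (π : Fin (b 0) → Rn K n) : Prop :=
  (∀ c, π c ∈ J) ∧ (∀ c, (π c).IsHomogeneous (dg 0 c)) ∧
    J = Ideal.span (Set.range π) ∧
    (∀ i r c, (φ i) r c = 0 ∨ ∃ e, ((φ i) r c).IsHomogeneous e ∧ dg i r + e = dg (i + 1) c) ∧
    LinearMap.ker (Matrix.mulVecLin (Matrix.of fun (_ : Fin 1) c => π c)) =
      LinearMap.range (Matrix.mulVecLin (φ 0)) ∧
    ∀ i, LinearMap.ker (Matrix.mulVecLin (φ i)) = LinearMap.range (Matrix.mulVecLin (φ (i + 1)))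

/-- `reg J ≤ m`: `J` admits a graded free resolution with `i`-th shifts at most `m + i`. -/
def RegLE (J : Ideal (Rn K n)) (m : ℕ) : Prop :=
  ∃ b dg φ π, IsGradedRes J b dg φ π ∧ ∀ i c, dg i c ≤ m + i

/-- The Castelnuovo–Mumford regularity of a homogeneous ideal. -/
def regId (J : Ideal (Rn K n)) : ℕ := sInf {m | RegLE J m}

/-- `J` has a linear resolution (generated in degree `d` with `i`-th syzygies in degree `d+i`). -/
def HasLinRes (J : Ideal (Rn K n)) (d : ℕ) : Prop :=
  ∃ b dg φ π, IsGradedRes J b dg φ π ∧ ∀ i c, dg i c = d + i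

/-- `I` is componentwise linear. -/
def CompLinear (I : Ideal (Rn K n)) : Prop :=
  ∀ d : ℕ, HasLinRes (comp I d) d

section AffineBlowup

variable {A : Type*} [CommRing A] (M : Ideal A) (ℓ : A)

/-- The affine blowup algebra `A[M/ℓ] ⊆ A_ℓ`. -/
def blowupAlgebra : Subalgebra A (Localization.Away ℓ) :=
  Algebra.adjoin A
    {x | ∃ m ∈ M, x * algebraMap A (Localization.Away ℓ) ℓ = algebraMap A (Localization.Away ℓ) m}

-- For `J = ⊤` these are the elements of `A[M/ℓ]`, in general those of `J·A[M/ℓ]`.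
def IsBlowupFraction (J : Ideal A) (t : Localization.Away ℓ) : Prop :=
  ∃ k : ℕ, ∃ y ∈ J * M ^ k,
    t * algebraMap A (Localization.Away ℓ) (ℓ ^ k) = algebraMap A (Localization.Away ℓ) y

variable {M ℓ}

namespace IsBlowupFraction

theorem algebraMap_of_mem {J : Ideal A} {y : A} (hy : y ∈ J) :
    IsBlowupFraction M ℓ J (algebraMap A _ y) :=
  ⟨0, y, by rwa [pow_zero, Ideal.one_eq_top, Ideal.mul_top], by rw [pow_zero, map_one, mul_one]⟩

theorem zero (J : Ideal A) : IsBlowupFraction M ℓ J 0 := by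
  simpa using algebraMap_of_mem (M := M) (ℓ := ℓ) J.zero_mem

theorem add (hℓ : ℓ ∈ M) {J : Ideal A} {t₁ t₂ : Localization.Away ℓ}
    (h₁ : IsBlowupFraction M ℓ J t₁) (h₂ : IsBlowupFraction M ℓ J t₂) :
    IsBlowupFraction M ℓ J (t₁ + t₂) := by
  obtain ⟨k₁, y₁, hy₁, e₁⟩ := h₁
  obtain ⟨k₂, y₂, hy₂, e₂⟩ := h₂
  set f := algebraMap A (Localization.Away ℓ)
  refine ⟨k₁ + k₂, y₁ * ℓ ^ k₂ + y₂ * ℓ ^ k₁, add_mem ?_ ?_, ?_⟩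
  · rw [pow_add, ← mul_assoc]
    exact Ideal.mul_mem_mul hy₁ (Ideal.pow_mem_pow hℓ k₂)
  · rw [add_comm, pow_add, ← mul_assoc]
    exact Ideal.mul_mem_mul hy₂ (Ideal.pow_mem_pow hℓ k₁)
  · calc (t₁ + t₂) * f (ℓ ^ (k₁ + k₂))
        = t₁ * f (ℓ ^ k₁) * f (ℓ ^ k₂) + t₂ * f (ℓ ^ k₂) * f (ℓ ^ k₁) := by
          rw [pow_add, map_mul]; ring
      _ = f (y₁ * ℓ ^ k₂ + y₂ * ℓ ^ k₁) := by rw [e₁, e₂, map_add, map_mul, map_mul]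

theorem mul {J₁ J₂ : Ideal A} {t₁ t₂ : Localization.Away ℓ}
    (h₁ : IsBlowupFraction M ℓ J₁ t₁) (h₂ : IsBlowupFraction M ℓ J₂ t₂) :
    IsBlowupFraction M ℓ (J₁ * J₂) (t₁ * t₂) := by
  obtain ⟨k₁, y₁, hy₁, e₁⟩ := h₁
  obtain ⟨k₂, y₂, hy₂, e₂⟩ := h₂
  refine ⟨k₁ + k₂, y₁ * y₂, ?_, ?_⟩
  · have h := Ideal.mul_mem_mul hy₁ hy₂
    rwa [mul_mul_mul_comm, ← pow_add] at h
  · rw [pow_add, map_mul, map_mul, ← e₁, ← e₂]; ring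

end IsBlowupFraction

theorem isBlowupFraction_top_of_mem_blowupAlgebra (hℓ : ℓ ∈ M) {t : Localization.Away ℓ}
    (ht : t ∈ blowupAlgebra M ℓ) : IsBlowupFraction M ℓ ⊤ t := by
  induction ht using Algebra.adjoin_induction with
  | mem x hx =>
    obtain ⟨m, hm, e⟩ := hx
    exact ⟨1, m, by rwa [Ideal.top_mul, pow_one], by rwa [pow_one]⟩
  | algebraMap r => exact .algebraMap_of_mem Submodule.mem_top
  | add x y _ _ hx hy => exact hx.add hℓ hy
  | mul x y _ _ hx hy => simpa only [Ideal.top_mul] using hx.mul hy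

theorem isBlowupFraction_of_mem_map (hℓ : ℓ ∈ M) {I : Ideal A} {s : blowupAlgebra M ℓ}
    (hs : s ∈ I.map (algebraMap A (blowupAlgebra M ℓ))) :
    IsBlowupFraction M ℓ I (s : Localization.Away ℓ) := by
  induction hs using Submodule.span_induction with
  | mem t ht =>
    obtain ⟨a, ha, rfl⟩ := ht
    exact .algebraMap_of_mem ha
  | zero => exact .zero I
  | add s₁ s₂ _ _ h₁ h₂ => exact h₁.add hℓ h₂
  | smul a s _ h =>
    simpa only [smul_eq_mul, Subalgebra.coe_mul, Ideal.top_mul] using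
      (isBlowupFraction_top_of_mem_blowupAlgebra hℓ a.2).mul h

theorem exists_mem_blowupAlgebra_mul_pow_eq {k : ℕ} {m : A} (hm : m ∈ M ^ k) :
    ∃ s ∈ blowupAlgebra M ℓ,
      s * algebraMap A (Localization.Away ℓ) (ℓ ^ k) = algebraMap A (Localization.Away ℓ) m := by
  set f := algebraMap A (Localization.Away ℓ)
  set u := IsLocalization.Away.invSelf (S := Localization.Away ℓ) ℓ
  induction k generalizing m with
  | zero => exact ⟨f m, Subalgebra.algebraMap_mem _ m, by simp⟩
  | succ k ih =>
    rw [pow_succ] at hm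
    induction hm using Submodule.mul_induction_on' with
    | mem_mul_mem a ha b hb =>
      obtain ⟨s, hs, e⟩ := ih ha
      have hb' : f b * u * f ℓ = f b := by
        rw [mul_assoc, mul_comm u, IsLocalization.Away.mul_invSelf, mul_one]
      refine ⟨s * (f b * u), mul_mem hs (Algebra.subset_adjoin ⟨b, hb, hb'⟩), ?_⟩
      rw [pow_succ, map_mul, map_mul, ← e]
      linear_combination s * f (ℓ ^ k) * hb'
    | add y₁ _ y₂ _ h₁ h₂ =>
      obtain ⟨s₁, hs₁, e₁⟩ := h₁
      obtain ⟨s₂, hs₂, e₂⟩ := h₂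
      exact ⟨s₁ + s₂, add_mem hs₁ hs₂, by rw [add_mul, e₁, e₂, map_add]⟩

theorem exists_mem_map_mul_pow_eq {I : Ideal A} {k : ℕ} {y : A} (hy : y ∈ I * M ^ k) :
    ∃ s ∈ I.map (algebraMap A (blowupAlgebra M ℓ)),
      (s : Localization.Away ℓ) * algebraMap A _ (ℓ ^ k) = algebraMap A _ y := by
  induction hy using Submodule.mul_induction_on' with
  | mem_mul_mem a ha m hm =>
    obtain ⟨s, hs, e⟩ := exists_mem_blowupAlgebra_mul_pow_eq (ℓ := ℓ) hm
    refine ⟨algebraMap A _ a * ⟨s, hs⟩, Ideal.mul_mem_right _ _ (Ideal.mem_map_of_mem _ ha), ?_⟩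
    rw [Subalgebra.coe_mul, mul_assoc, Subalgebra.coe_algebraMap, e, ← map_mul]
  | add y₁ _ y₂ _ h₁ h₂ =>
    obtain ⟨s₁, hs₁, e₁⟩ := h₁
    obtain ⟨s₂, hs₂, e₂⟩ := h₂
    exact ⟨s₁ + s₂, add_mem hs₁ hs₂, by rw [Subalgebra.coe_add, add_mul, e₁, e₂, map_add]⟩

theorem isBlowupFraction_algebraMap_iff (hℓ : ℓ ∈ M) {J : Ideal A} {x : A} :
    IsBlowupFraction M ℓ J (algebraMap A _ x) ↔
      ∃ k : ℕ, x ∈ (J * M ^ k).colon (Ideal.span {ℓ ^ k}) := by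
  simp only [Ideal.mem_colon_span_singleton]
  constructor
  · rintro ⟨k, y, hy, e⟩
    rw [← map_mul, IsLocalization.eq_iff_exists (Submonoid.powers ℓ)] at e
    obtain ⟨⟨_, j, rfl⟩, e⟩ := e
    have hx : x * ℓ ^ (k + j) = y * ℓ ^ j := by
      simp only at e
      rw [pow_add]; linear_combination e
    refine ⟨k + j, ?_⟩
    rw [hx, pow_add, ← mul_assoc]
    exact Ideal.mul_mem_mul hy (Ideal.pow_mem_pow hℓ j)
  · rintro ⟨k, hk⟩
    exact ⟨k, x * ℓ ^ k, hk, (map_mul _ _ _).symm⟩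

theorem algebraMap_mem_map_blowupAlgebra_iff (hℓ : ℓ ∈ M) {I : Ideal A} {x : A} :
    algebraMap A (blowupAlgebra M ℓ) x ∈ I.map (algebraMap A (blowupAlgebra M ℓ)) ↔
      ∃ k : ℕ, x ∈ (I * M ^ k).colon (Ideal.span {ℓ ^ k}) := by
  rw [← isBlowupFraction_algebraMap_iff hℓ]
  refine ⟨isBlowupFraction_of_mem_map hℓ, ?_⟩
  rintro ⟨k, y, hy, e⟩
  obtain ⟨s, hs, e'⟩ := exists_mem_map_mul_pow_eq hy
  have hu : IsUnit (algebraMap A (Localization.Away ℓ) (ℓ ^ k)) :=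
    IsLocalization.map_units _ (⟨ℓ ^ k, k, rfl⟩ : Submonoid.powers ℓ)
  convert hs
  exact Subtype.ext (hu.mul_right_cancel (e.trans e'.symm))

end AffineBlowup

theorem MvPolynomial.IsHomogeneous.mem_span_range_X {σ R : Type*} [CommSemiring R]
    {p : MvPolynomial σ R} {d : ℕ} (hp : p.IsHomogeneous d) (hd : d ≠ 0) :
    p ∈ Ideal.span (Set.range (X : σ → MvPolynomial σ R)) := by
  rw [← Set.image_univ, mem_ideal_span_X_image]
  intro m hm
  by_contra! hc
  have hm0 : m = 0 := Finsupp.ext fun i => hc i (Set.mem_univ i)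
  exact hd (by simpa [hm0] using (hp (mem_support_iff.mp hm)).symm)

theorem stmt0_general (K : Type) [Field K] (n : ℕ) (ℓ : Rn K n)
    (hℓ : ℓ.IsHomogeneous 1) (I : Ideal (Rn K n)) :
    ∀ x : Rn K n, x ∈ contraction I ℓ ↔
      ∃ k : ℕ, x ∈ (I * Mi K n ^ k).colon (Ideal.span {ℓ ^ k}) := fun _ =>
  algebraMap_mem_map_blowupAlgebra_iff (hℓ.mem_span_range_X one_ne_zero)

/-- `J = IS ∩ R` equals the union over `k ∈ ℕ` of the ideals `(I·M^k : ℓ^k)`. -/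
theorem stmt0 (K : Type) [Field K] (n : ℕ) (ℓ : Rn K n) (hℓ0 : ℓ ≠ 0)
    (hℓ : ℓ.IsHomogeneous 1) (I : Ideal (Rn K n)) (hI : IsHomog I) :
    ∀ x : Rn K n, x ∈ contraction I ℓ ↔
      ∃ k : ℕ, x ∈ (I * Mi K n ^ k).colon (Ideal.span {ℓ ^ k}) :=
  stmt0_general K n ℓ hℓ I

end
end

section
/- Let R = K[x_1,...,x_n], ℓ a nonzero linear form, I a homogeneous ideal, S = R[M/ℓ], and J = IS ∩ R. Then for every degree j, the degree-j component J_j equals the degree-j component of the ideal (I_⟨j⟩^sat : ℓ^∞), where I_⟨j⟩ is the ideal generated by the degree-j forms in I and sat denotes saturation with respect to M. -/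
open MvPolynomial

noncomputable section

variable {K : Type} [Field K] {n : ℕ}

/-!
Every element of `S = R[M/ℓ]` is `g/ℓ^k` with `g ∈ M^k`, so `f ∈ IS ∩ R` if and only if
`f ℓ^k ∈ I M^k` for some `k`. For `f` of degree `j`, `f ℓ^k` has degree `j + k`, and since `M^k`
is generated in degree `k`, the degree-`(j + k)` part of `I M^k` is that of `I_⟨j⟩ M^k`, which is
also that of `I_⟨j⟩`. Finally, a power of `ℓ ∈ M` carries any element of `I_⟨j⟩^sat` into `I_⟨j⟩`.
-/

section AffineBlowup

open IsLocalization.Away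

variable {A : Type*} [CommRing A]

/-- The affine chart `A[𝔪/ℓ] ⊆ A_ℓ` of the blowup of `𝔪`; `quadExt ℓ` is
`affineBlowup (Mi K n) ℓ`. -/
def affineBlowup (𝔪 : Ideal A) (ℓ : A) : Subalgebra A (Localization.Away ℓ) :=
  Algebra.adjoin A
    {x | ∃ m ∈ 𝔪, x * algebraMap A (Localization.Away ℓ) ℓ = algebraMap A (Localization.Away ℓ) m}

variable {𝔪 I : Ideal A} {ℓ : A}

lemma algebraMap_mul_invSelf_pow_mem_affineBlowup {k : ℕ} {g : A} (hg : g ∈ 𝔪 ^ k) :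
    algebraMap A (Localization.Away ℓ) g * invSelf ℓ ^ k ∈ affineBlowup 𝔪 ℓ := by
  induction k generalizing g with
  | zero => simpa only [pow_zero, mul_one] using Subalgebra.algebraMap_mem _ g
  | succ k ih =>
    rw [pow_succ'] at hg
    refine Submodule.mul_induction_on hg (fun m hm b hb => ?_) fun x y hx hy => ?_
    · have hm' : algebraMap A _ m * invSelf ℓ ∈ affineBlowup 𝔪 ℓ :=
        Algebra.subset_adjoin
          ⟨m, hm, by rw [mul_assoc, mul_comm (invSelf ℓ), mul_invSelf, mul_one]⟩
      convert mul_mem hm' (ih hb) using 1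
      rw [map_mul, pow_succ']
      ring
    · rw [map_add, add_mul]
      exact add_mem hx hy

lemma exists_mem_pow_of_mem_affineBlowup (hℓ : ℓ ∈ 𝔪) {s : Localization.Away ℓ}
    (hs : s ∈ affineBlowup 𝔪 ℓ) :
    ∃ k, ∃ g ∈ 𝔪 ^ k, s * algebraMap A _ ℓ ^ k = algebraMap A _ g := by
  induction hs using Algebra.adjoin_induction with
  | mem x hx =>
    obtain ⟨m, hm, hx⟩ := hx
    exact ⟨1, m, by rwa [pow_one], by rwa [pow_one]⟩
  | algebraMap r =>
    exact ⟨0, r, by rw [pow_zero, Ideal.one_eq_top]; trivial, by rw [pow_zero, mul_one]⟩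
  | add x y _ _ ihx ihy =>
    obtain ⟨k₁, g₁, hg₁, hx⟩ := ihx
    obtain ⟨k₂, g₂, hg₂, hy⟩ := ihy
    refine ⟨k₁ + k₂, g₁ * ℓ ^ k₂ + g₂ * ℓ ^ k₁, ?_, ?_⟩
    · have h₁ := Ideal.mul_mem_mul hg₁ (Ideal.pow_mem_pow hℓ k₂)
      have h₂ := Ideal.mul_mem_mul hg₂ (Ideal.pow_mem_pow hℓ k₁)
      rw [← pow_add] at h₁ h₂
      rw [add_comm k₂] at h₂
      exact add_mem h₁ h₂
    · rw [map_add, map_mul, map_mul, map_pow, map_pow, ← hx, ← hy]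
      ring
  | mul x y _ _ ihx ihy =>
    obtain ⟨k₁, g₁, hg₁, hx⟩ := ihx
    obtain ⟨k₂, g₂, hg₂, hy⟩ := ihy
    have h := Ideal.mul_mem_mul hg₁ hg₂
    rw [← pow_add] at h
    refine ⟨k₁ + k₂, g₁ * g₂, h, ?_⟩
    rw [map_mul, ← hx, ← hy]
    ring

lemma exists_mem_mul_pow_of_mem_map (hℓ : ℓ ∈ 𝔪) {x : affineBlowup 𝔪 ℓ}
    (hx : x ∈ I.map (algebraMap A (affineBlowup 𝔪 ℓ))) :
    ∃ k, ∃ a ∈ I * 𝔪 ^ k, (x : Localization.Away ℓ) * algebraMap A _ ℓ ^ k = algebraMap A _ a := by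
  induction hx using Submodule.span_induction with
  | mem x hx =>
    obtain ⟨a, ha, rfl⟩ := hx
    exact ⟨0, a, by simpa using ha, by simp⟩
  | zero => exact ⟨0, 0, zero_mem _, by simp⟩
  | add x y _ _ ihx ihy =>
    obtain ⟨k₁, a₁, ha₁, hx⟩ := ihx
    obtain ⟨k₂, a₂, ha₂, hy⟩ := ihy
    refine ⟨k₁ + k₂, a₁ * ℓ ^ k₂ + a₂ * ℓ ^ k₁, ?_, ?_⟩
    · rw [pow_add]
      refine add_mem ?_ ?_
      · simpa only [mul_assoc] using Ideal.mul_mem_mul ha₁ (Ideal.pow_mem_pow hℓ k₂)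
      · simpa only [mul_assoc, mul_comm (𝔪 ^ k₂)] using
          Ideal.mul_mem_mul ha₂ (Ideal.pow_mem_pow hℓ k₁)
    · simp only [Subalgebra.coe_add, map_add, map_mul, map_pow, ← hx, ← hy]
      ring
  | smul r x _ ih =>
    obtain ⟨k₁, a, ha, hx⟩ := ih
    obtain ⟨k₂, g, hg, hr⟩ := exists_mem_pow_of_mem_affineBlowup hℓ r.2
    refine ⟨k₁ + k₂, a * g, ?_, ?_⟩
    · simpa only [pow_add, mul_assoc] using Ideal.mul_mem_mul ha hg
    · simp only [smul_eq_mul, Subalgebra.coe_mul, map_mul, ← hx, ← hr]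
      ring

lemma exists_mem_map_of_mem_mul_pow {k : ℕ} {a : A} (ha : a ∈ I * 𝔪 ^ k) :
    ∃ y ∈ I.map (algebraMap A (affineBlowup 𝔪 ℓ)),
      (y : Localization.Away ℓ) = algebraMap A _ a * invSelf ℓ ^ k := by
  refine Submodule.mul_induction_on ha (fun b hb g hg => ?_) fun a₁ a₂ h₁ h₂ => ?_
  · refine ⟨algebraMap A _ b * ⟨_, algebraMap_mul_invSelf_pow_mem_affineBlowup hg⟩,
      Ideal.mul_mem_right _ _ (Ideal.mem_map_of_mem _ hb), ?_⟩
    simp only [Subalgebra.coe_mul, Subalgebra.coe_algebraMap, map_mul]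
    ring
  · obtain ⟨y₁, hy₁, e₁⟩ := h₁
    obtain ⟨y₂, hy₂, e₂⟩ := h₂
    exact ⟨y₁ + y₂, add_mem hy₁ hy₂, by simp only [Subalgebra.coe_add, e₁, e₂, map_add, add_mul]⟩

theorem mem_comap_map_affineBlowup_iff (hℓ : ℓ ∈ 𝔪) {f : A} :
    f ∈ (I.map (algebraMap A (affineBlowup 𝔪 ℓ))).comap (algebraMap A (affineBlowup 𝔪 ℓ)) ↔
      ∃ k, f * ℓ ^ k ∈ I * 𝔪 ^ k := by
  constructor
  · intro hf
    obtain ⟨k, a, ha, he⟩ := exists_mem_mul_pow_of_mem_map hℓ hf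
    rw [Subalgebra.coe_algebraMap, ← map_pow, ← map_mul] at he
    obtain ⟨⟨_, m, rfl⟩, hm⟩ := (IsLocalization.eq_iff_exists (Submonoid.powers ℓ) _).1 he
    have hfa : f * ℓ ^ (k + m) = a * ℓ ^ m := by linear_combination hm
    refine ⟨k + m, ?_⟩
    rw [hfa, pow_add, ← mul_assoc]
    exact Ideal.mul_mem_mul ha (Ideal.pow_mem_pow hℓ m)
  · rintro ⟨k, hk⟩
    obtain ⟨y, hy, e⟩ := exists_mem_map_of_mem_mul_pow (ℓ := ℓ) hk
    rw [Ideal.mem_comap]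
    convert hy
    apply Subtype.ext
    rw [e, map_mul, map_pow, mul_assoc, ← mul_pow, mul_invSelf, one_pow, mul_one]
    rfl

end AffineBlowup

namespace MvPolynomial

variable {σ R : Type*} [CommRing R]

lemma IsHomogeneous.mem_pow_idealOfVars {p : MvPolynomial σ R} {s : ℕ} (hp : p.IsHomogeneous s) :
    p ∈ idealOfVars σ R ^ s :=
  (mem_pow_idealOfVars_iff s p).2 fun x hx => by
    rw [Finsupp.degree_eq_weight_one]
    exact (hp (mem_support_iff.1 hx)).ge

attribute [local instance] gradedAlgebra in
lemma homogeneousComponent_mul_of_isHomogeneous_right {a b : MvPolynomial σ R} {i m : ℕ}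
    (hb : b.IsHomogeneous i) (him : i ≤ m) :
    homogeneousComponent m (a * b) = homogeneousComponent (m - i) a * b := by
  rw [← decomposition.decompose'_apply, ← decomposition.decompose'_apply]
  exact DirectSum.coe_decompose_mul_of_right_mem_of_le (homogeneousSubmodule σ R) hb him

end MvPolynomial

section Graded

variable {I : Ideal (Rn K n)} {j : ℕ}

lemma mem_Mi_of_isHomogeneous_one {ℓ : Rn K n} (hℓ : ℓ.IsHomogeneous 1) : ℓ ∈ Mi K n :=
  pow_one (Mi K n) ▸ hℓ.mem_pow_idealOfVars

lemma homogeneousComponent_mem_comp_of_mem_mul_pow (hI : IsHomog I) {k : ℕ} {g : Rn K n}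
    (hg : g ∈ I * Mi K n ^ k) : homogeneousComponent (j + k) g ∈ comp I j := by
  refine Submodule.mul_induction_on hg (fun a ha m hm => ?_) fun x y hx hy => ?_
  · rw [Mi, pow_idealOfVars_eq_span] at hm
    induction hm using Submodule.span_induction generalizing a with
    | mem m hm =>
      obtain ⟨u, hu, rfl⟩ := hm
      rw [homogeneousComponent_mul_of_isHomogeneous_right (isHomogeneous_monomial 1 hu)
        (Nat.le_add_left k j), Nat.add_sub_cancel]
      exact Ideal.mul_mem_right _ _
        (Ideal.subset_span ⟨hI a ha j, homogeneousComponent_isHomogeneous j a⟩)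
    | zero => simp
    | add m₁ m₂ _ _ h₁ h₂ => simpa only [mul_add, map_add] using add_mem (h₁ a ha) (h₂ a ha)
    | smul r m _ h =>
      simpa only [smul_eq_mul, ← mul_assoc, mul_comm a r] using h (r * a) (I.mul_mem_left r ha)
  · rw [map_add]
    exact add_mem hx hy

lemma homogeneousComponent_mem_mul_pow_of_mem_comp {g : Rn K n} (hg : g ∈ comp I j) (s : ℕ) :
    homogeneousComponent (j + s) g ∈ I * Mi K n ^ s := by
  obtain ⟨c, hc, rfl⟩ := Submodule.mem_span_set.1 hg
  rw [Finsupp.sum, map_sum]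
  refine Submodule.sum_mem _ fun a ha => ?_
  obtain ⟨haI, haj⟩ := hc ha
  rw [smul_eq_mul, homogeneousComponent_mul_of_isHomogeneous_right haj (Nat.le_add_right j s),
    Nat.add_sub_cancel_left, mul_comm _ a]
  exact Ideal.mul_mem_mul haI (homogeneousComponent_isHomogeneous s (c a)).mem_pow_idealOfVars

end Graded

lemma exists_mul_pow_mem_of_mem_iSup {A ι : Type*} [CommRing A] {J : Ideal A} {g x : A}
    {p : ι → Ideal A} (hp : ∀ i, ∀ y ∈ p i, ∃ k, y * g ^ k ∈ J) (hx : x ∈ ⨆ i, p i) :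
    ∃ k, x * g ^ k ∈ J := by
  refine Submodule.iSup_induction p (motive := fun y => ∃ k, y * g ^ k ∈ J) hx hp ⟨0, by simp⟩
    fun y z ⟨k₁, hk₁⟩ ⟨k₂, hk₂⟩ => ⟨k₁ + k₂, ?_⟩
  rw [add_mul, pow_add, ← mul_assoc, mul_comm (g ^ k₁), ← mul_assoc]
  exact add_mem (J.mul_mem_right _ hk₁) (J.mul_mem_right _ hk₂)

section Saturation

variable {J : Ideal (Rn K n)} {f g : Rn K n}

lemma mem_colonInfty_iff : f ∈ colonInfty J g ↔ ∃ k, f * g ^ k ∈ J :=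
  ⟨exists_mul_pow_mem_of_mem_iSup fun k _ hy => ⟨k, Ideal.mem_colon_span_singleton.1 hy⟩,
    fun ⟨k, hk⟩ => Submodule.mem_iSup_of_mem k (Ideal.mem_colon_span_singleton.2 hk)⟩

lemma le_sat : J ≤ sat J := fun _ hf =>
  Submodule.mem_iSup_of_mem 0 (Submodule.mem_colon.2 fun p _ => J.mul_mem_right p hf)

lemma exists_mul_pow_mem_of_mem_sat (hg : g ∈ Mi K n) (hf : f ∈ sat J) : ∃ t, f * g ^ t ∈ J :=
  exists_mul_pow_mem_of_mem_iSup
    (fun t _ hy => ⟨t, Submodule.mem_colon.1 hy _ (Ideal.pow_mem_pow hg t)⟩) hf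

end Saturation

theorem exists_mul_pow_mem_mul_pow_iff {ℓ f : Rn K n} {I : Ideal (Rn K n)} {j : ℕ}
    (hℓ : ℓ.IsHomogeneous 1) (hI : IsHomog I) (hf : f.IsHomogeneous j) :
    (∃ k, f * ℓ ^ k ∈ I * Mi K n ^ k) ↔ ∃ k, f * ℓ ^ k ∈ sat (comp I j) := by
  have hfℓ (k : ℕ) : homogeneousComponent (j + k) (f * ℓ ^ k) = f * ℓ ^ k :=
    homogeneousComponent_eq_self (by simpa only [one_mul] using hf.mul (hℓ.pow k))
  constructor
  · rintro ⟨k, hk⟩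
    exact ⟨k, le_sat (hfℓ k ▸ homogeneousComponent_mem_comp_of_mem_mul_pow hI hk)⟩
  · rintro ⟨k, hk⟩
    obtain ⟨t, ht⟩ := exists_mul_pow_mem_of_mem_sat (mem_Mi_of_isHomogeneous_one hℓ) hk
    rw [mul_assoc, ← pow_add] at ht
    exact ⟨k + t, hfℓ (k + t) ▸ homogeneousComponent_mem_mul_pow_of_mem_comp ht (k + t)⟩

theorem stmt1_general (K : Type) [Field K] (n : ℕ) (ℓ : Rn K n)
    (hℓ : ℓ.IsHomogeneous 1) (I : Ideal (Rn K n)) (hI : IsHomog I) (j : ℕ) :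
    ∀ f : Rn K n, f.IsHomogeneous j →
      (f ∈ contraction I ℓ ↔ f ∈ colonInfty (sat (comp I j)) ℓ) := by
  intro f hf
  rw [mem_colonInfty_iff, ← exists_mul_pow_mem_mul_pow_iff hℓ hI hf]
  exact mem_comap_map_affineBlowup_iff (mem_Mi_of_isHomogeneous_one hℓ)

/-- the degree-`j` component of `J = IS ∩ R` equals the degree-`j`
component of `(I_⟨j⟩^sat : ℓ^∞)`. -/
theorem stmt1 (K : Type) [Field K] (n : ℕ) (ℓ : Rn K n) (hℓ0 : ℓ ≠ 0)
    (hℓ : ℓ.IsHomogeneous 1) (I : Ideal (Rn K n)) (hI : IsHomog I) (j : ℕ) :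
    ∀ f : Rn K n, f.IsHomogeneous j →
      (f ∈ contraction I ℓ ↔ f ∈ colonInfty (sat (comp I j)) ℓ) :=
  stmt1_general K n ℓ hℓ I hI j

end
end

section
/- Let I be a homogeneous ideal of R = K[x_1,...,x_n] with no minimal generators in degree j+1. Then I_⟨j+1⟩ = I_⟨j⟩ ∩ M^{j+1}, and consequently the saturations of I_⟨j+1⟩ and I_⟨j⟩ with respect to M coincide. -/
/-!
A degree-`(j+1)` form of `I` lies in `M·I`, i.e. is `∑ xᵢ gᵢ` with `gᵢ ∈ I`; taking degree-`(j+1)`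
parts turns it into `∑ xᵢ (gᵢ)_j`, which lies in `I_⟨j⟩` because `I` is homogeneous. Conversely, an
element of `I_⟨j⟩ ∩ M^{j+1}` has no component of degree `≤ j`, and each higher component is a
combination of degree-`j` generators with coefficients of positive degree, hence lies in
`M·I_⟨j⟩ ⊆ I_⟨j+1⟩`. The saturations agree since `I_⟨j+1⟩ ⊆ I_⟨j⟩` and `M^{j+1}·I_⟨j⟩ ⊆ I_⟨j+1⟩`.
-/

open MvPolynomial

noncomputable section

variable {K : Type} [Field K] {n : ℕ}

namespace MvPolynomial

variable {σ R : Type*} [CommSemiring R]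

theorem IsHomogeneous.mem_pow_idealOfVars_s3 {f : MvPolynomial σ R} {d : ℕ}
    (hf : f.IsHomogeneous d) : f ∈ idealOfVars σ R ^ d :=
  (mem_pow_idealOfVars_iff d f).mpr fun x hx ↦ by
    rw [Finsupp.degree_eq_weight_one]
    exact (hf (mem_support_iff.mp hx)).ge

theorem homogeneousComponent_eq_zero_of_mem_pow_idealOfVars {f : MvPolynomial σ R} {k d : ℕ}
    (hf : f ∈ idealOfVars σ R ^ k) (hd : d < k) : homogeneousComponent d f = 0 := by
  ext x
  rw [coeff_homogeneousComponent, coeff_zero]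
  split_ifs with hx
  · exact (mem_pow_idealOfVars_iff' k f).mp hf x (hx ▸ hd)
  · rfl

section GradedAlgebra

attribute [local instance] gradedAlgebra

theorem homogeneousComponent_mul_of_isHomogeneous {p g : MvPolynomial σ R} {m d : ℕ}
    (hg : g.IsHomogeneous m) (hmd : m ≤ d) :
    homogeneousComponent d (p * g) = homogeneousComponent (d - m) p * g := by
  rw [← decomposition.decompose'_apply, ← decomposition.decompose'_apply]
  exact DirectSum.coe_decompose_mul_of_right_mem_of_le (homogeneousSubmodule σ R)
    ((mem_homogeneousSubmodule m g).mpr hg) hmd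

end GradedAlgebra

theorem homogeneousComponent_mem_idealOfVars_mul_span {S : Set (MvPolynomial σ R)} {d e : ℕ}
    (hS : ∀ g ∈ S, g.IsHomogeneous d) {f : MvPolynomial σ R} (hf : f ∈ Ideal.span S)
    (hde : d < e) : homogeneousComponent e f ∈ idealOfVars σ R * Ideal.span S := by
  obtain ⟨c, hcS, rfl⟩ := Submodule.mem_span_set.mp hf
  rw [map_finsuppSum]
  refine Submodule.sum_mem _ fun g hg ↦ ?_
  dsimp only
  rw [smul_eq_mul, homogeneousComponent_mul_of_isHomogeneous (hS g (hcS hg)) hde.le]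
  exact Ideal.mul_mem_mul
    (Ideal.pow_le_self (by omega) (homogeneousComponent_isHomogeneous _ _).mem_pow_idealOfVars_s3)
    (Ideal.subset_span (hcS hg))

theorem span_inf_pow_idealOfVars_succ_le {S : Set (MvPolynomial σ R)} {d : ℕ}
    (hS : ∀ g ∈ S, g.IsHomogeneous d) :
    Ideal.span S ⊓ idealOfVars σ R ^ (d + 1) ≤ idealOfVars σ R * Ideal.span S := by
  rintro f ⟨hfS, hfM⟩
  rw [← sum_homogeneousComponent f]
  refine Submodule.sum_mem _ fun e _ ↦ ?_
  rcases lt_or_ge d e with hde | hed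
  · exact homogeneousComponent_mem_idealOfVars_mul_span hS hfS hde
  · rw [homogeneousComponent_eq_zero_of_mem_pow_idealOfVars hfM (by omega)]
    exact zero_mem _

end MvPolynomial

theorem comp_le_Mi_pow (I : Ideal (Rn K n)) (d : ℕ) : comp I d ≤ Mi K n ^ d :=
  Ideal.span_le.mpr fun _ hf ↦ hf.2.mem_pow_idealOfVars_s3

theorem Mi_mul_comp_le (I : Ideal (Rn K n)) (d : ℕ) : Mi K n * comp I d ≤ comp I (d + 1) := by
  rw [Mi, comp, Ideal.span_mul_span', Ideal.span_le]
  rintro _ ⟨_, ⟨i, rfl⟩, f, ⟨hfI, hf⟩, rfl⟩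
  refine Ideal.subset_span ⟨I.mul_mem_left _ hfI, ?_⟩
  simpa only [add_comm] using (isHomogeneous_X K i).mul hf

theorem comp_inf_Mi_pow_succ_le (I : Ideal (Rn K n)) (d : ℕ) :
    comp I d ⊓ Mi K n ^ (d + 1) ≤ Mi K n * comp I d :=
  span_inf_pow_idealOfVars_succ_le fun _ hf ↦ hf.2

theorem homogeneousComponent_succ_mem_comp {I : Ideal (Rn K n)} (hI : IsHomog I) {p : Rn K n}
    (hp : p ∈ Mi K n * I) (d : ℕ) : homogeneousComponent (d + 1) p ∈ comp I d := by
  rw [mul_comm, ← smul_eq_mul, Mi, Submodule.mem_ideal_smul_span_iff_exists_sum] at hp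
  obtain ⟨a, haI, rfl⟩ := hp
  rw [map_finsuppSum]
  refine Submodule.sum_mem _ fun i _ ↦ ?_
  dsimp only
  rw [smul_eq_mul, homogeneousComponent_mul_of_isHomogeneous (isHomogeneous_X K i) (by omega)]
  exact Ideal.mul_mem_right _ _
    (Ideal.subset_span ⟨hI _ (haI i) d, homogeneousComponent_isHomogeneous d _⟩)

theorem comp_succ_le_comp {I : Ideal (Rn K n)} (hI : IsHomog I) {j : ℕ}
    (hgen : ∀ f ∈ I, f.IsHomogeneous (j + 1) → f ∈ Mi K n * I) : comp I (j + 1) ≤ comp I j :=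
  Ideal.span_le.mpr fun f ⟨hfI, hf⟩ ↦
    homogeneousComponent_eq_self hf ▸ homogeneousComponent_succ_mem_comp hI (hgen f hfI hf) j

theorem comp_succ_eq_comp_inf_Mi_pow {I : Ideal (Rn K n)} (hI : IsHomog I) {j : ℕ}
    (hgen : ∀ f ∈ I, f.IsHomogeneous (j + 1) → f ∈ Mi K n * I) :
    comp I (j + 1) = comp I j ⊓ Mi K n ^ (j + 1) :=
  le_antisymm (le_inf (comp_succ_le_comp hI hgen) (comp_le_Mi_pow I _))
    ((comp_inf_Mi_pow_succ_le I j).trans (Mi_mul_comp_le I j))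

theorem sat_mono {J J' : Ideal (Rn K n)} (h : J ≤ J') : sat J ≤ sat J' :=
  iSup_mono fun _ ↦ Submodule.colon_mono h le_rfl

theorem sat_le_sat_of_Mi_pow_mul_le {J J' : Ideal (Rn K n)} (m : ℕ) (h : Mi K n ^ m * J ≤ J') :
    sat J ≤ sat J' := by
  refine iSup_le fun k ↦ le_trans ?_ (le_iSup _ (m + k))
  intro r hr
  rw [Submodule.mem_colon] at hr ⊢
  intro p hp
  rw [SetLike.mem_coe, pow_add] at hp
  refine Submodule.mul_induction_on hp (fun a ha b hb ↦ ?_) (fun x y hx hy ↦ ?_)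
  · rw [smul_eq_mul, mul_left_comm]
    exact h (Ideal.mul_mem_mul ha (hr b hb))
  · rw [smul_add]
    exact add_mem hx hy

/-- if `I` has no minimal generators in degree `j+1`, then
`I_⟨j+1⟩ = I_⟨j⟩ ∩ M^{j+1}` and the saturations of `I_⟨j+1⟩` and `I_⟨j⟩` coincide. -/
theorem stmt3 (K : Type) [Field K] (n : ℕ) (I : Ideal (Rn K n)) (hI : IsHomog I) (j : ℕ)
    (hnogen : ∀ f ∈ I, f.IsHomogeneous (j + 1) → f ∈ Mi K n * I) :
    comp I (j + 1) = comp I j ⊓ Mi K n ^ (j + 1) ∧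
      sat (comp I (j + 1)) = sat (comp I j) := by
  have hcomp := comp_succ_eq_comp_inf_Mi_pow hI hnogen
  refine ⟨hcomp, le_antisymm (sat_mono (hcomp ▸ inf_le_left)) ?_⟩
  refine sat_le_sat_of_Mi_pow_mul_le (j + 1) ?_
  rw [hcomp]
  exact le_inf Ideal.mul_le_right Ideal.mul_le_left

end
end

section
/- Every contracted homogeneous ideal of R = K[x_1,...,x_n] is M-full: there exists a nonzero linear form ℓ with IM : ℓ = I. -/
/-!
If `ℓ f ∈ IM`, then in `S = R[M/ℓ]` we get `f = (ℓ f)/ℓ ∈ I · (M/ℓ) ⊆ IS`, because `ℓ` is a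
non-zero-divisor of `S ⊆ R_ℓ`; hence `f ∈ IS ∩ R = I`. Conversely `I ⊆ IM : ℓ` as `ℓ ∈ M`.
-/

open MvPolynomial

noncomputable section

variable {K : Type} [Field K] {n : ℕ}

theorem mem_Mi_of_isHomogeneous {ℓ : Rn K n} {d : ℕ} (hℓ : ℓ.IsHomogeneous d) (hd : d ≠ 0) :
    ℓ ∈ Mi K n := by
  rw [Mi, ← Set.image_univ, mem_ideal_span_X_image]
  intro m hm
  have hm0 : m ≠ 0 := by
    rintro rfl
    exact hd (by simpa using (hℓ (mem_support_iff.mp hm)).symm)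
  obtain ⟨i, hi⟩ := Finsupp.ne_iff.mp hm0
  exact ⟨i, Set.mem_univ i, hi⟩

theorem Ideal.le_colon_mul_span_singleton {R : Type*} [CommRing R] {I J : Ideal R} {a : R}
    (ha : a ∈ J) : I ≤ (I * J).colon (Ideal.span {a}) :=
  fun _ hf => Ideal.mem_colon_span_singleton.mpr (Ideal.mul_mem_mul hf ha)

/-- The cofactor of `m` is `m/ℓ`, one of the generators of `S`. -/
theorem map_Mi_le_span_quadExt (ℓ : Rn K n) :
    (Mi K n).map (algebraMap (Rn K n) (quadExt ℓ)) ≤ Ideal.span {algebraMap _ _ ℓ} := by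
  rw [Ideal.map_le_iff_le_comap]
  intro m hm
  have hdiv := IsLocalization.mk'_spec (Localization.Away ℓ) m ⟨ℓ, Submonoid.mem_powers ℓ⟩
  exact Ideal.mem_span_singleton'.mpr
    ⟨⟨_, Algebra.subset_adjoin ⟨m, hm, hdiv⟩⟩, Subtype.ext hdiv⟩

theorem isLeftRegular_algebraMap_quadExt (ℓ : Rn K n) :
    IsLeftRegular (algebraMap (Rn K n) (quadExt ℓ) ℓ) := fun _ _ hxy =>
  Subtype.ext <| (IsLocalization.map_units (Localization.Away ℓ)
    (⟨ℓ, Submonoid.mem_powers ℓ⟩ : Submonoid.powers ℓ)).mul_left_cancel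
      (congrArg Subtype.val hxy)

theorem colon_le_contraction (I : Ideal (Rn K n)) (ℓ : Rn K n) :
    (I * Mi K n).colon (Ideal.span {ℓ}) ≤ contraction I ℓ := by
  intro f hf
  rw [Ideal.mem_colon_span_singleton] at hf
  set φ := algebraMap (Rn K n) (quadExt ℓ)
  have hfℓ : φ (f * ℓ) ∈ Ideal.span {φ ℓ} * I.map φ := by
    have h := Ideal.mem_map_of_mem φ hf
    rw [Ideal.map_mul, mul_comm] at h
    exact Ideal.mul_mono_left (map_Mi_le_span_quadExt ℓ) h
  obtain ⟨z, hz, hzf⟩ := Ideal.mem_span_singleton_mul.mp hfℓ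
  have hzφ : z = φ f :=
    isLeftRegular_algebraMap_quadExt ℓ (show φ ℓ * z = φ ℓ * φ f by rw [hzf, map_mul, mul_comm])
  exact Ideal.mem_comap.mpr (hzφ ▸ hz)

theorem stmt6_general (K : Type) [Field K] (n : ℕ) (I : Ideal (Rn K n))
    (hc : IsContracted I) : IsMFull I := by
  obtain ⟨ℓ, hℓ0, hℓ1, hIc⟩ := hc
  refine ⟨ℓ, hℓ0, hℓ1, le_antisymm ?_ ?_⟩
  · exact (colon_le_contraction I ℓ).trans hIc.ge
  · exact Ideal.le_colon_mul_span_singleton (mem_Mi_of_isHomogeneous hℓ1 one_ne_zero)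

/-- every contracted ideal is `M`-full. -/
theorem stmt6 (K : Type) [Field K] (n : ℕ) (I : Ideal (Rn K n)) (hI : IsHomog I)
    (hc : IsContracted I) : IsMFull I :=
  stmt6_general K n I hc

end
end

section
/- Let I be a homogeneous ideal of R = K[x_1,...,x_n] of initial degree d and ℓ a nonzero linear form with I + (ℓ) = M^d + (ℓ). Then I = I_⟨d⟩ + ℓ·(I : ℓ). -/
open MvPolynomial

noncomputable section

variable {K : Type} [Field K] {n : ℕ}

/-! Since `ℓ` is homogeneous, `I + (ℓ) = M^d + (ℓ)` can be read degree by degree: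
every monomial of degree `d` is a form of `I` plus a multiple of `ℓ`, so
`M^d ⊆ I_⟨d⟩ + (ℓ)`. As `o(I) = d`, also `I ⊆ M^d`; writing `f ∈ I` as `g + qℓ` with
`g ∈ I_⟨d⟩ ⊆ I` forces `qℓ ∈ I`, i.e. `q ∈ I : ℓ`. -/

namespace Ideal

variable {R : Type*} [CommRing R]

theorem span_singleton_mul_colon_le (I : Ideal R) (a : R) :
    span {a} * I.colon (span {a}) ≤ I :=
  span_singleton_mul_le_iff.mpr fun q hq => by
    simpa [mem_colon_span_singleton, mul_comm] using hq

theorem mem_sup_span_singleton_mul_colon {I J : Ideal R} {a f : R} (hJI : J ≤ I)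
    (hfI : f ∈ I) (hf : f ∈ J ⊔ span {a}) : f ∈ J ⊔ span {a} * I.colon (span {a}) := by
  obtain ⟨g, hg, _, hc, rfl⟩ := Submodule.mem_sup.mp hf
  obtain ⟨q, rfl⟩ := mem_span_singleton'.mp hc
  have hq : q ∈ I.colon (span {a}) := by
    rw [mem_colon_span_singleton]
    simpa using I.sub_mem hfI (hJI hg)
  exact add_mem (mem_sup_left hg)
    (mem_sup_right (mul_comm a q ▸ mul_mem_mul (mem_span_singleton_self a) hq))

end Ideal

namespace MvPolynomial

variable {σ R : Type*} [CommSemiring R]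

attribute [local instance] MvPolynomial.gradedAlgebra in
theorem homogeneousComponent_mem_span_singleton {p q : MvPolynomial σ R} {k : ℕ}
    (hp : p.IsHomogeneous k) (hq : q ∈ Ideal.span {p}) (m : ℕ) :
    homogeneousComponent m q ∈ Ideal.span {p} :=
  homogeneousComponent_mem_of_mem
    (Ideal.homogeneous_span _ _ fun _ hx => (Set.mem_singleton_iff.mp hx) ▸ ⟨k, hp⟩) hq m

end MvPolynomial

variable {K : Type} [Field K] {n : ℕ}

theorem comp_le (I : Ideal (Rn K n)) (j : ℕ) : comp I j ≤ I :=
  Ideal.span_le.mpr fun _ hf => hf.1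

theorem le_Mi_pow_order {I : Ideal (Rn K n)} (hI : IsHomog I) : I ≤ Mi K n ^ order I := by
  intro f hf
  change f ∈ idealOfVars (Fin n) K ^ order I
  rw [mem_pow_idealOfVars_iff]
  intro x hx
  refine Nat.sInf_le ⟨_, hI f hf x.degree, fun h0 => ?_, homogeneousComponent_isHomogeneous _ _⟩
  have := congrArg (coeff x) h0
  rw [coeff_homogeneousComponent, if_pos rfl, coeff_zero] at this
  exact mem_support_iff.mp hx this

theorem homogeneousComponent_mem_comp_sup {I : Ideal (Rn K n)} (hI : IsHomog I)
    {ℓ : Rn K n} {k : ℕ} (hℓ : ℓ.IsHomogeneous k) {f : Rn K n}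
    (hf : f ∈ I + Ideal.span {ℓ}) (d : ℕ) :
    homogeneousComponent d f ∈ comp I d + Ideal.span {ℓ} := by
  obtain ⟨a, ha, c, hc, rfl⟩ := Submodule.mem_sup.mp hf
  rw [map_add]
  exact add_mem
    (Submodule.mem_sup_left (Ideal.subset_span ⟨hI a ha d, homogeneousComponent_isHomogeneous d a⟩))
    (Submodule.mem_sup_right (homogeneousComponent_mem_span_singleton hℓ hc d))

theorem Mi_pow_le_comp_sup {I : Ideal (Rn K n)} (hI : IsHomog I) {ℓ : Rn K n} {k : ℕ}
    (hℓ : ℓ.IsHomogeneous k) {d : ℕ} (h : Mi K n ^ d ≤ I + Ideal.span {ℓ}) :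
    Mi K n ^ d ≤ comp I d + Ideal.span {ℓ} := by
  change idealOfVars (Fin n) K ^ d ≤ _
  rw [pow_idealOfVars_eq_span, Ideal.span_le]
  rintro _ ⟨x, hx, rfl⟩
  have hmono : (monomial x 1 : Rn K n).IsHomogeneous d := isHomogeneous_monomial 1 hx
  have hmem : monomial x 1 ∈ I + Ideal.span {ℓ} :=
    h ((monomial_mem_pow_idealOfVars_iff d x one_ne_zero).mpr hx.ge)
  have := homogeneousComponent_mem_comp_sup hI hℓ hmem d
  rwa [homogeneousComponent_eq_self hmono] at this

theorem stmt10_general (K : Type) [Field K] (n : ℕ) (I : Ideal (Rn K n)) (hI : IsHomog I)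
    (d : ℕ) (hd : order I = d) (ℓ : Rn K n) (hℓ : ℓ.IsHomogeneous 1)
    (h : I + Ideal.span {ℓ} = Mi K n ^ d + Ideal.span {ℓ}) :
    I = comp I d + Ideal.span {ℓ} * I.colon (Ideal.span {ℓ}) := by
  refine le_antisymm (fun f hf => ?_) (sup_le (comp_le I d) (I.span_singleton_mul_colon_le ℓ))
  have hfM : f ∈ Mi K n ^ d := hd ▸ le_Mi_pow_order hI hf
  exact Ideal.mem_sup_span_singleton_mul_colon (comp_le I d) hf
    (Mi_pow_le_comp_sup hI hℓ (h ▸ le_sup_left) hfM)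

/-- if `I + (ℓ) = M^d + (ℓ)` with `d = o(I)`, then
`I = I_⟨d⟩ + ℓ·(I : ℓ)`. -/
theorem stmt10 (K : Type) [Field K] (n : ℕ) (I : Ideal (Rn K n)) (hI : IsHomog I)
    (d : ℕ) (hd : order I = d) (ℓ : Rn K n) (hℓ0 : ℓ ≠ 0) (hℓ : ℓ.IsHomogeneous 1)
    (h : I + Ideal.span {ℓ} = Mi K n ^ d + Ideal.span {ℓ}) :
    I = comp I d + Ideal.span {ℓ} * I.colon (Ideal.span {ℓ}) :=
  stmt10_general K n I hI d hd ℓ hℓ h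
end
end

section
/- Let I be a homogeneous ideal of R = K[x_1,...,x_n] of initial degree d and ℓ a nonzero linear form with I + (ℓ) = M^d + (ℓ). Then dim R/I_⟨d⟩ ≤ 1, where I_⟨d⟩ is the ideal generated by the degree-d forms of I. -/
open MvPolynomial

noncomputable section

variable {K : Type} [Field K] {n : ℕ}

/-! Write `J = I_⟨d⟩`. Taking degree-`d` components in `I + (ℓ) = M^d + (ℓ)` shows that every
monomial of degree `d` is congruent modulo `J` to some `b ℓ` with `deg b < d` (and that `J = R`
when `d = 0`). Reducing degrees this way, `R/J` is generated as a `K[t]`-module, `t ↦ ℓ`, by the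
finitely many monomials of degree `< d`. So `R/J` is integral over `K[t]`, and chains of primes
contract strictly along an integral extension, whence `dim R/J ≤ dim K[t] = 1`. -/

theorem ringKrullDim_le_of_isIntegral {R A : Type*} [CommRing R] [CommRing A] (f : R →+* A)
    (hf : f.IsIntegral) : ringKrullDim A ≤ ringKrullDim R := by
  let := f.toAlgebra
  have : Algebra.IsIntegral R A := ⟨hf⟩
  exact Order.krullDim_le_of_strictMono (PrimeSpectrum.comap (algebraMap R A))
    fun _ _ hpq => Ideal.IsIntegral.comap_lt_comap (R := R) hpq

namespace MvPolynomial

variable {σ R : Type*} [CommRing R]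

theorem homogeneousComponent_mul_of_isHomogeneous_s11 {ℓ : MvPolynomial σ R} {k : ℕ}
    (hℓ : ℓ.IsHomogeneous k) (j : ℕ) (b : MvPolynomial σ R) :
    homogeneousComponent (j + k) (b * ℓ) = homogeneousComponent j b * ℓ := by
  induction b using MvPolynomial.induction_on' with
  | monomial s c =>
    have hs := isHomogeneous_monomial c (rfl : s.degree = s.degree)
    rw [homogeneousComponent_of_mem (hs.mul hℓ), homogeneousComponent_of_mem hs]
    split_ifs
    · rfl
    · omega
    · omega
    · simp
  | add p q hp hq => rw [add_mul, map_add, map_add, hp, hq, add_mul]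

theorem homogeneousComponent_mul_eq_zero_of_lt {ℓ : MvPolynomial σ R} {k j : ℕ}
    (hℓ : ℓ.IsHomogeneous k) (hj : j < k) (b : MvPolynomial σ R) :
    homogeneousComponent j (b * ℓ) = 0 := by
  induction b using MvPolynomial.induction_on' with
  | monomial s c =>
    rw [homogeneousComponent_of_mem ((isHomogeneous_monomial c rfl).mul hℓ), if_neg (by omega)]
  | add p q hp hq => rw [add_mul, map_add, hp, hq, add_zero]

theorem finite_aeval_quotient_of_monomial_sub_mul_mem [Finite σ] {J : Ideal (MvPolynomial σ R)}
    {ℓ : MvPolynomial σ R} {d : ℕ}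
    (h : ∀ m : σ →₀ ℕ, m.degree = d →
      ∃ b : MvPolynomial σ R, b.totalDegree < d ∧ monomial m 1 - b * ℓ ∈ J) :
    (Polynomial.aeval (R := R) (Ideal.Quotient.mk J ℓ)).toRingHom.Finite := by
  let := (Polynomial.aeval (R := R) (Ideal.Quotient.mk J ℓ)).toRingHom.toAlgebra
  have smul_def (p : Polynomial R) (x : MvPolynomial σ R ⧸ J) :
      p • x = Polynomial.aeval (Ideal.Quotient.mk J ℓ) p * x := rfl
  let T := Submodule.span (Polynomial R)
    ((fun m => Ideal.Quotient.mk J (monomial m 1)) '' {m : σ →₀ ℕ | m.degree < d})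
  have mem_T_of_support (f : MvPolynomial σ R)
      (hf : ∀ m ∈ f.support, Ideal.Quotient.mk J (monomial m 1) ∈ T) :
      Ideal.Quotient.mk J f ∈ T := by
    rw [f.as_sum, map_sum]
    refine Submodule.sum_mem _ fun m hm => ?_
    have hC : Ideal.Quotient.mk J (monomial m (coeff m f)) =
        Polynomial.C (coeff m f) • Ideal.Quotient.mk J (monomial m 1) := by
      rw [smul_def, Polynomial.aeval_C, ← Ideal.Quotient.mk_algebraMap, algebraMap_eq, ← map_mul,
        C_mul_monomial, mul_one]
    rw [hC]
    exact T.smul_mem _ (hf m hm)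
  suffices mem_T : ∀ f : MvPolynomial σ R, Ideal.Quotient.mk J f ∈ T by
    change Module.Finite _ _
    refine ⟨⟨((Finsupp.finite_of_degree_lt (σ := σ) d).image
      fun m => Ideal.Quotient.mk J (monomial m 1)).toFinset, ?_⟩⟩
    rw [Set.Finite.coe_toFinset, eq_top_iff]
    rintro x -
    obtain ⟨f, rfl⟩ := Ideal.Quotient.mk_surjective x
    exact mem_T f
  intro f
  induction hN : f.totalDegree using Nat.strong_induction_on generalizing f with
  | _ N ih =>
  refine mem_T_of_support f fun m hm => ?_
  by_cases hlow : m.degree < d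
  · exact Submodule.subset_span ⟨m, hlow, rfl⟩
  obtain ⟨m₂, hm₂, hdeg₂⟩ := Finsupp.exists_le_degree_eq m d (not_lt.1 hlow)
  obtain ⟨b, hb, hbJ⟩ := h m₂ hdeg₂
  obtain ⟨m₁, rfl⟩ := le_iff_exists_add'.1 hm₂
  have hred : Ideal.Quotient.mk J (monomial (m₁ + m₂) (1 : R)) =
      (Polynomial.X : Polynomial R) • Ideal.Quotient.mk J (monomial m₁ 1 * b) := by
    rw [smul_def, Polynomial.aeval_X, ← mul_one (1 : R), ← monomial_mul, map_mul,
      Ideal.Quotient.eq.2 hbJ, map_mul, map_mul, mul_one]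
    ring
  rw [hred]
  refine T.smul_mem _ (ih _ ?_ _ rfl)
  calc (monomial m₁ (1 : R) * b).totalDegree
      ≤ (monomial m₁ (1 : R)).totalDegree + b.totalDegree := totalDegree_mul _ _
    _ ≤ m₁.degree + b.totalDegree := Nat.add_le_add_right (totalDegree_monomial_le m₁ 1) _
    _ < (m₁ + m₂).degree := by rw [map_add, hdeg₂]; omega
    _ ≤ N := hN ▸ le_totalDegree hm

end MvPolynomial

section

variable {I : Ideal (Rn K n)} {ℓ : Rn K n}

theorem homogeneousComponent_mem_comp (hI : IsHomog I) {a : Rn K n} (ha : a ∈ I) (j : ℕ) :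
    homogeneousComponent j a ∈ comp I j :=
  Ideal.subset_span ⟨hI a ha j, homogeneousComponent_isHomogeneous j a⟩

theorem homogeneousComponent_zero_mem_comp_of_mem_add_span (hI : IsHomog I)
    (hℓ : ℓ.IsHomogeneous 1) {f : Rn K n} (hf : f ∈ I + Ideal.span {ℓ}) :
    homogeneousComponent 0 f ∈ comp I 0 := by
  obtain ⟨a, ha, c, hc, rfl⟩ := Submodule.mem_sup.1 hf
  obtain ⟨b, rfl⟩ := Ideal.mem_span_singleton'.1 hc
  rw [map_add, homogeneousComponent_mul_eq_zero_of_lt hℓ zero_lt_one, add_zero]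
  exact homogeneousComponent_mem_comp hI ha 0

theorem exists_homogeneousComponent_sub_mul_mem_comp (hI : IsHomog I)
    (hℓ : ℓ.IsHomogeneous 1) {f : Rn K n} (hf : f ∈ I + Ideal.span {ℓ}) (j : ℕ) :
    ∃ b : Rn K n, b.IsHomogeneous j ∧
      homogeneousComponent (j + 1) f - b * ℓ ∈ comp I (j + 1) := by
  obtain ⟨a, ha, c, hc, rfl⟩ := Submodule.mem_sup.1 hf
  obtain ⟨b, rfl⟩ := Ideal.mem_span_singleton'.1 hc
  refine ⟨homogeneousComponent j b, homogeneousComponent_isHomogeneous j b, ?_⟩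
  rw [map_add, homogeneousComponent_mul_of_isHomogeneous_s11 hℓ, add_sub_cancel_right]
  exact homogeneousComponent_mem_comp hI ha (j + 1)

end

theorem stmt11_general (K : Type) [Field K] (n : ℕ) (I : Ideal (Rn K n)) (hI : IsHomog I)
    (d : ℕ) (ℓ : Rn K n) (hℓ : ℓ.IsHomogeneous 1)
    (h : I + Ideal.span {ℓ} = Mi K n ^ d + Ideal.span {ℓ}) :
    ringKrullDim (Rn K n ⧸ comp I d) ≤ 1 := by
  rcases d with _ | e
  · have hone : (1 : Rn K n) ∈ comp I 0 := by
      simpa using homogeneousComponent_zero_mem_comp_of_mem_add_span hI hℓ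
        (h ▸ Submodule.mem_sup_left (by simp) : (1 : Rn K n) ∈ I + Ideal.span {ℓ})
    have : Subsingleton (Rn K n ⧸ comp I 0) :=
      Ideal.Quotient.subsingleton_iff.2 ((Ideal.eq_top_iff_one _).2 hone)
    exact ringKrullDim_eq_bot_of_subsingleton.trans_le bot_le
  have hred (m : Fin n →₀ ℕ) (hm : m.degree = e + 1) :
      ∃ b : Rn K n, b.totalDegree < e + 1 ∧ monomial m 1 - b * ℓ ∈ comp I (e + 1) := by
    have hmem : monomial m (1 : K) ∈ I + Ideal.span {ℓ} :=
      h ▸ Submodule.mem_sup_left ((monomial_mem_pow_idealOfVars_iff _ _ one_ne_zero).2 hm.ge)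
    obtain ⟨b, hb, hbJ⟩ := exists_homogeneousComponent_sub_mul_mem_comp hI hℓ hmem e
    rw [homogeneousComponent_eq_self (isHomogeneous_monomial _ hm)] at hbJ
    exact ⟨b, hb.totalDegree_le.trans_lt e.lt_succ_self, hbJ⟩
  calc ringKrullDim (Rn K n ⧸ comp I (e + 1))
      ≤ ringKrullDim (Polynomial K) := ringKrullDim_le_of_isIntegral _
        (finite_aeval_quotient_of_monomial_sub_mul_mem hred).to_isIntegral
    _ = 1 := by
      rw [Polynomial.ringKrullDim_of_isNoetherianRing, ringKrullDim_eq_zero_of_field, zero_add]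

/-- if `I + (ℓ) = M^d + (ℓ)` with `d = o(I)`, then `dim R/I_⟨d⟩ ≤ 1`. -/
theorem stmt11 (K : Type) [Field K] (n : ℕ) (I : Ideal (Rn K n)) (hI : IsHomog I)
    (d : ℕ) (hd : order I = d) (ℓ : Rn K n) (hℓ0 : ℓ ≠ 0) (hℓ : ℓ.IsHomogeneous 1)
    (h : I + Ideal.span {ℓ} = Mi K n ^ d + Ideal.span {ℓ}) :
    ringKrullDim (Rn K n ⧸ comp I d) ≤ 1 :=
  stmt11_general K n I hI d ℓ hℓ h
end
end

section
/- Let P = (x_1,...,x_{n-1}) in R = K[x_1,...,x_n] and let d ≤ t be positive integers. Then the integral closure of (x_1^d, ..., x_{n-1}^d, x_n^t) equals L(P,a) = Σ_{i=0}^d P^{d-i}·x_n^{a_i} where a_i = ⌈it/d⌉ for i = 0,...,d. -/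
open MvPolynomial

noncomputable section

/-- The prime ideal `P = (x_1,…,x_{n-1})` in `R = K[x_1,…,x_n]` with `n = m+1`. -/
def Pid (K : Type) [Field K] (m : ℕ) : Ideal (MvPolynomial (Fin (m + 1)) K) :=
  Ideal.span {f | ∃ i : Fin (m + 1), i ≠ Fin.last m ∧ f = X i}

/-- `L(P,a) = Σ_{i=0}^d P^{d-i}·x_n^{a_i}` for a sequence `a`. -/
def Lideal (K : Type) [Field K] (m : ℕ) (d : ℕ) (a : ℕ → ℕ) :
    Ideal (MvPolynomial (Fin (m + 1)) K) :=
  ∑ i ∈ Finset.range (d + 1), Pid K m ^ (d - i) * Ideal.span {X (Fin.last m) ^ a i}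

/-- Product of a sequence of length `dl+1` with one of length `el+1`:
`(ab)_j = min { a_r + b_s : r + s = j }`. -/
def seqMul (dl el : ℕ) (a b : ℕ → ℕ) : ℕ → ℕ := fun j =>
  sInf {v | ∃ r s : ℕ, r + s = j ∧ r ≤ dl ∧ s ≤ el ∧ v = a r + b s}

/-- `seqPow dl a k` is the `(k+1)`-fold product `a^{(k+1)}` of the sequence `a`
(of length `dl+1`) with itself. -/
def seqPow (dl : ℕ) (a : ℕ → ℕ) : ℕ → (ℕ → ℕ)
  | 0 => a
  | k + 1 => seqMul dl ((k + 1) * dl) a (seqPow dl a k)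

/-- `a'_j = min { ⌈(a^{(k)})_{kj}/k⌉ : k > 0 }` (here `k+1` runs over positive integers,
and `⌈x/(k+1)⌉ = (x + k)/(k+1)` in natural division). -/
def seqIC (dl : ℕ) (a : ℕ → ℕ) : ℕ → ℕ := fun j =>
  sInf {v | ∃ k : ℕ, v = (seqPow dl a k ((k + 1) * j) + k) / (k + 1)}

/-!
Give `x_1, …, x_{n-1}` weight `t` and `x_n` weight `d`; both sides equal the ideal `W` spanned by
the monomials of weight at least `td`.

A monomial `x^α x_n^b` has weight `t|α| + db` and lies in `P^{d-i} x_n^{a_i}` as soon as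
`|α| ≥ d - i` and `db ≥ it`, which gives `L(P,a) = W`. The weighted order is a valuation on
`K[x]` and the generators of `I = (x_1^d, …, x_{n-1}^d, x_n^t)` have weight `td`, so everything
integral over `I` lies in `W`. Conversely, a monomial of weight at least `ntd` is divisible by
some `x_j^d` or by `x_n^t` with a cofactor of weight at least `(n-1)td`; hence `f W' ⊆ I W'` for
`f ∈ W`, where `W'` is the (finitely generated, nonzero) weight-`(n-1)td` ideal, and the
determinant trick makes `f` integral over `I`.
-/

open Polynomial in
theorem mem_intClo_of_monic_of_aeval_eq_zero {A : Type} [CommRing A] [Nontrivial A] {I : Ideal A}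
    {f : A} {p : A[X]} (hp : p.Monic) (hcoeff : ∀ k, p.coeff k ∈ I ^ (p.natDegree - k))
    (hroot : aeval f p = 0) : f ∈ intClo I := by
  set N := p.natDegree
  have hN : 0 < N := by
    refine Nat.pos_of_ne_zero fun h => one_ne_zero (α := A) ?_
    rwa [hp.natDegree_eq_zero.mp h, map_one] at hroot
  refine ⟨N, fun i => p.coeff (N - i), hN, fun i _ hi => ?_, ?_⟩
  · simpa [Nat.sub_sub_self hi] using hcoeff (N - i)
  have hreflect : ∑ i ∈ Finset.Icc 1 N, p.coeff (N - i) * f ^ (N - i) =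
      ∑ k ∈ Finset.range N, p.coeff k * f ^ k := by
    refine Finset.sum_bij' (fun i _ => N - i) (fun k _ => N - k) ?_ ?_ ?_ ?_ (fun _ _ => rfl) <;>
      intro i hi <;> simp only [Finset.mem_Icc, Finset.mem_range] at hi ⊢ <;> omega
  rw [hreflect, ← hroot, aeval_eq_sum_range, Finset.sum_range_succ, hp.coeff_natDegree, one_smul,
    add_comm]
  rfl

theorem mem_intClo_of_forall_mul_mem_mul {A : Type} [CommRing A] [IsDomain A] {I M : Ideal A}
    (hM : M.FG) (hM0 : M ≠ ⊥) {f : A} (hf : ∀ x ∈ M, f * x ∈ I * M) : f ∈ intClo I := by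
  have : Module.Finite A M := Module.Finite.iff_fg.mpr hM
  obtain ⟨p, hmonic, -, hcoeff, hp⟩ :=
    LinearMap.exists_monic_and_natDegree_eq_and_coeff_mem_pow_and_aeval_eq_zero A
      (algebraMap A (Module.End A M) f) I (by
        rintro _ ⟨x, rfl⟩
        rw [Submodule.mem_smul_top_iff, Module.algebraMap_end_apply]
        exact hf x x.2)
  obtain ⟨z, hzM, hz⟩ := Submodule.exists_mem_ne_zero_of_ne_bot hM0
  refine mem_intClo_of_monic_of_aeval_eq_zero hmonic hcoeff ?_
  have hpz := congrArg Subtype.val (LinearMap.congr_fun hp ⟨z, hzM⟩)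
  rw [Polynomial.aeval_algebraMap_apply, Module.algebraMap_end_apply] at hpz
  exact (mul_eq_zero.mp hpz).resolve_right hz

theorem MvPowerSeries.weightedOrder_pow {σ R : Type*} [Semiring R] [Nontrivial R] [NoZeroDivisors R]
    (w : σ → ℕ) (f : MvPowerSeries σ R) (n : ℕ) :
    (f ^ n).weightedOrder w = n • f.weightedOrder w := by
  induction n with
  | zero => rw [pow_zero, MvPowerSeries.weightedOrder_one, zero_smul]
  | succ n ih => rw [pow_succ, MvPowerSeries.weightedOrder_mul, ih, succ_nsmul]

namespace MvPolynomial

open Finsupp (weight)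

section WeightIdeal

variable {σ R : Type*} [CommSemiring R] (w : σ → ℕ)

variable (R) in
def weightIdeal (c : ℕ) : Ideal (MvPolynomial σ R) where
  carrier := {f | ∀ a ∈ f.support, c ≤ weight w a}
  zero_mem' := by simp
  add_mem' {f g} hf hg a ha := by
    classical
    rcases Finset.mem_union.mp (support_add ha) with ha | ha
    exacts [hf a ha, hg a ha]
  smul_mem' g f hf a ha := by
    classical
    obtain ⟨u, -, v, hv, rfl⟩ := Finset.mem_add.mp (support_mul g f ha)
    rw [map_add]
    exact (hf v hv).trans le_add_self

variable {w}

theorem mem_weightIdeal {c : ℕ} {f : MvPolynomial σ R} :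
    f ∈ weightIdeal R w c ↔ ∀ a ∈ f.support, c ≤ weight w a :=
  Iff.rfl

theorem antitone_weightIdeal : Antitone (weightIdeal R w) :=
  fun _ _ h _ hf => mem_weightIdeal.mpr fun a ha => h.trans (mem_weightIdeal.mp hf a ha)

theorem monomial_mem_weightIdeal {c : ℕ} {a : σ →₀ ℕ} (r : R) (h : c ≤ weight w a) :
    monomial a r ∈ weightIdeal R w c := by
  classical
  refine mem_weightIdeal.mpr fun b hb => ?_
  rwa [Finset.mem_singleton.mp (support_monomial_subset hb)]

theorem X_pow_mem_weightIdeal {c : ℕ} {i : σ} {e : ℕ} (h : c ≤ e * w i) :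
    (X i ^ e : MvPolynomial σ R) ∈ weightIdeal R w c := by
  rw [X_pow_eq_monomial]
  exact monomial_mem_weightIdeal 1 (by rwa [Finsupp.weight_single, smul_eq_mul])

theorem mul_mem_weightIdeal {c c' : ℕ} {f g : MvPolynomial σ R} (hf : f ∈ weightIdeal R w c)
    (hg : g ∈ weightIdeal R w c') : f * g ∈ weightIdeal R w (c + c') := by
  classical
  refine mem_weightIdeal.mpr fun a ha => ?_
  obtain ⟨u, hu, v, hv, rfl⟩ := Finset.mem_add.mp (support_mul f g ha)
  rw [map_add]
  exact add_le_add (mem_weightIdeal.mp hf u hu) (mem_weightIdeal.mp hg v hv)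

theorem weightIdeal_mul_le (c c' : ℕ) :
    weightIdeal R w c * weightIdeal R w c' ≤ weightIdeal R w (c + c') :=
  Ideal.mul_le.mpr fun _ hf _ hg => mul_mem_weightIdeal hf hg

theorem pow_le_weightIdeal {c : ℕ} {J : Ideal (MvPolynomial σ R)} (hJ : J ≤ weightIdeal R w c) :
    ∀ k : ℕ, J ^ k ≤ weightIdeal R w (k * c)
  | 0 => by
    rw [pow_zero, Ideal.one_eq_top, zero_mul]
    exact fun f _ => mem_weightIdeal.mpr fun a _ => Nat.zero_le _
  | k + 1 => by
    rw [pow_succ, Nat.succ_mul]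
    exact (Ideal.mul_mono (pow_le_weightIdeal hJ k) hJ).trans (weightIdeal_mul_le _ _)

theorem weightIdeal_le_of_monomial_mem {c : ℕ} {J : Ideal (MvPolynomial σ R)}
    (h : ∀ a, c ≤ weight w a → monomial a 1 ∈ J) : weightIdeal R w c ≤ J := by
  intro f hf
  rw [f.as_sum]
  refine Ideal.sum_mem J fun a ha => ?_
  rw [← mul_one (coeff a f), ← C_mul_monomial]
  exact J.mul_mem_left _ (h a (mem_weightIdeal.mp hf a ha))

theorem monomial_mem_mul_weightIdeal {J : Ideal (MvPolynomial σ R)} {c e : ℕ} {i : σ}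
    {a : σ →₀ ℕ} (r : R) (hX : X i ^ e ∈ J) (he : e ≤ a i) (ha : c + e * w i ≤ weight w a) :
    monomial a r ∈ J * weightIdeal R w c := by
  have hsplit : Finsupp.single i e + (a - Finsupp.single i e) = a :=
    add_tsub_cancel_of_le (Finsupp.single_le_iff.mpr he)
  have hweight := congrArg (weight w) hsplit
  rw [map_add, Finsupp.weight_single, smul_eq_mul] at hweight
  rw [← hsplit, ← one_mul r, ← monomial_mul, ← X_pow_eq_monomial]
  exact Ideal.mul_mem_mul hX (monomial_mem_weightIdeal r (by omega))

theorem mem_weightIdeal_iff_le_weightedOrder {c : ℕ} {f : MvPolynomial σ R} :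
    f ∈ weightIdeal R w c ↔ (c : ℕ∞) ≤ (f : MvPowerSeries σ R).weightedOrder w := by
  rw [mem_weightIdeal]
  constructor
  · refine fun hf => MvPowerSeries.le_weightedOrder w fun a ha => ?_
    rw [coeff_coe, ← notMem_support_iff]
    exact fun hmem => (hf a hmem).not_gt (by exact_mod_cast ha)
  · intro hf a ha
    have := hf.trans (MvPowerSeries.weightedOrder_le w (by rwa [coeff_coe, ← mem_support_iff]))
    exact_mod_cast this

end WeightIdeal

theorem intClo_subset_weightIdeal {σ R : Type} [CommRing R] [IsDomain R] {w : σ → ℕ} {c : ℕ}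
    {J : Ideal (MvPolynomial σ R)} (hJ : J ≤ weightIdeal R w c) :
    intClo J ⊆ weightIdeal R w c := by
  rintro f ⟨N, r, -, hr, hroot⟩
  by_contra hfc
  rw [SetLike.mem_coe, mem_weightIdeal_iff_le_weightedOrder, not_le] at hfc
  obtain ⟨n, hn⟩ := ENat.ne_top_iff_exists.mp hfc.ne_top
  rw [← hn, Nat.cast_lt] at hfc
  have hf : f ∈ weightIdeal R w n := mem_weightIdeal_iff_le_weightedOrder.mpr hn.le
  have hfN : f ^ N ∈ weightIdeal R w (N * n + 1) := by
    rw [eq_neg_of_add_eq_zero_left hroot]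
    refine neg_mem (Ideal.sum_mem _ fun i hi => ?_)
    obtain ⟨hi1, hiN⟩ := Finset.mem_Icc.mp hi
    have hri := pow_le_weightIdeal hJ i (hr i hi1 hiN)
    have hfi := pow_le_weightIdeal le_rfl (N - i) (Ideal.pow_mem_pow hf (N - i))
    refine antitone_weightIdeal ?_ (mul_mem_weightIdeal hri hfi)
    have : i * (n + 1) ≤ i * c := Nat.mul_le_mul_left i hfc
    have : N * n = i * n + (N - i) * n := by rw [← Nat.add_mul, Nat.add_sub_cancel' hiN]
    nlinarith
  rw [mem_weightIdeal_iff_le_weightedOrder, coe_pow, MvPowerSeries.weightedOrder_pow, ← hn,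
    nsmul_eq_mul] at hfN
  norm_cast at hfN
  omega

end MvPolynomial

open Finsupp (weight)

def lastWeight (m d t : ℕ) : Fin (m + 1) → ℕ := fun j => if j = Fin.last m then d else t

section LastWeight

variable {m d t : ℕ}

@[simp]
theorem lastWeight_last : lastWeight m d t (Fin.last m) = d := if_pos rfl

@[simp]
theorem lastWeight_castSucc (i : Fin m) : lastWeight m d t i.castSucc = t :=
  if_neg i.castSucc_ne_last

theorem weight_lastWeight (a : Fin (m + 1) →₀ ℕ) :
    weight (lastWeight m d t) a = t * ∑ i : Fin m, a i.castSucc + d * a (Fin.last m) := by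
  simp [Finsupp.weight_eq_sum, Fin.sum_univ_castSucc, Finset.mul_sum, mul_comm]

theorem monomial_one_eq_prod_castSucc_mul {R : Type*} [CommSemiring R] (a : Fin (m + 1) →₀ ℕ) :
    monomial a (1 : R) =
      (∏ i : Fin m, X i.castSucc ^ a i.castSucc) * X (Fin.last m) ^ a (Fin.last m) := by
  rw [monomial_eq, C_1, one_mul, Finsupp.prod_fintype _ _ fun _ => pow_zero _,
    Fin.prod_univ_castSucc]

end LastWeight

variable (K : Type) [Field K] (m d t : ℕ)

def paramIdeal : Ideal (MvPolynomial (Fin (m + 1)) K) :=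
  Ideal.span ({f | ∃ i : Fin (m + 1), i ≠ Fin.last m ∧ f = X i ^ d} ∪ {X (Fin.last m) ^ t})

variable {K m d t}

theorem paramIdeal_le_weightIdeal :
    paramIdeal K m d t ≤ weightIdeal K (lastWeight m d t) (t * d) := by
  refine Ideal.span_le.mpr ?_
  rintro _ (⟨i, hi, rfl⟩ | rfl)
  · exact X_pow_mem_weightIdeal (by simp [lastWeight, hi, mul_comm])
  · exact X_pow_mem_weightIdeal (by rw [lastWeight_last])

theorem weightIdeal_le_paramIdeal_mul (hd : 0 < d) :
    weightIdeal K (lastWeight m d t) (t * d + m * (t * d)) ≤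
      paramIdeal K m d t * weightIdeal K (lastWeight m d t) (m * (t * d)) := by
  refine weightIdeal_le_of_monomial_mem fun a ha => ?_
  rw [weight_lastWeight] at ha
  by_cases hy : t ≤ a (Fin.last m)
  · refine monomial_mem_mul_weightIdeal 1 (Ideal.subset_span (Or.inr rfl)) hy ?_
    rw [weight_lastWeight, lastWeight_last]
    linarith
  obtain ⟨i, hi⟩ : ∃ i : Fin m, d ≤ a i.castSucc := by
    by_contra! hx
    have hsum : ∑ i : Fin m, a i.castSucc ≤ m * (d - 1) := by
      simpa using Finset.sum_le_sum fun i (_ : i ∈ Finset.univ) => Nat.le_sub_one_of_lt (hx i)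
    obtain ⟨d, rfl⟩ := Nat.exists_eq_add_one_of_ne_zero hd.ne'
    obtain ⟨t, rfl⟩ := Nat.exists_eq_add_one_of_ne_zero (by omega : t ≠ 0)
    rw [Nat.add_sub_cancel] at hsum
    nlinarith
  refine monomial_mem_mul_weightIdeal 1
    (Ideal.subset_span (Or.inl ⟨_, i.castSucc_ne_last, rfl⟩)) hi ?_
  rw [weight_lastWeight, lastWeight_castSucc]
  linarith

theorem intClo_paramIdeal (hd : 0 < d) :
    intClo (paramIdeal K m d t) = weightIdeal K (lastWeight m d t) (t * d) := by
  refine (intClo_subset_weightIdeal paramIdeal_le_weightIdeal).antisymm fun f hf => ?_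
  have hM : X (Fin.last m) ^ (m * t) ∈ weightIdeal K (lastWeight m d t) (m * (t * d)) :=
    X_pow_mem_weightIdeal (by simp [mul_comm, mul_left_comm])
  refine mem_intClo_of_forall_mul_mem_mul (IsNoetherian.noetherian _)
    ((Submodule.ne_bot_iff _).mpr ⟨_, hM, pow_ne_zero _ (X_ne_zero _)⟩) fun x hx => ?_
  exact weightIdeal_le_paramIdeal_mul hd (mul_mem_weightIdeal hf hx)

theorem X_mem_Pid {i : Fin (m + 1)} (hi : i ≠ Fin.last m) : X i ∈ Pid K m :=
  Ideal.subset_span ⟨i, hi, rfl⟩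

theorem Pid_le_weightIdeal : Pid K m ≤ weightIdeal K (lastWeight m d t) t := by
  refine Ideal.span_le.mpr ?_
  rintro _ ⟨i, hi, rfl⟩
  rw [SetLike.mem_coe, ← pow_one (X i : MvPolynomial (Fin (m + 1)) K)]
  exact X_pow_mem_weightIdeal (by simp [lastWeight, hi])

theorem monomial_mem_Pid_pow_mul_span {k c : ℕ} {a : Fin (m + 1) →₀ ℕ}
    (hk : k ≤ ∑ i : Fin m, a i.castSucc) (hc : c ≤ a (Fin.last m)) :
    monomial a 1 ∈ Pid K m ^ k * Ideal.span {X (Fin.last m) ^ c} := by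
  rw [monomial_one_eq_prod_castSucc_mul]
  refine Ideal.mul_mem_mul (Ideal.pow_le_pow_right hk ?_)
    (Ideal.mem_span_singleton.mpr (pow_dvd_pow _ hc))
  rw [← Finset.prod_pow_eq_pow_sum]
  exact Ideal.prod_mem_prod fun i _ =>
    Ideal.pow_mem_pow (X_mem_Pid i.castSucc_ne_last) _

theorem Lideal_eq_weightIdeal (hd : 0 < d) :
    Lideal K m d (fun i => i * t ⌈/⌉ d) = weightIdeal K (lastWeight m d t) (t * d) := by
  rw [Lideal, Ideal.sum_eq_sup]
  refine le_antisymm (Finset.sup_le fun i hi => ?_) (weightIdeal_le_of_monomial_mem fun a ha => ?_)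
  · have hspan : Ideal.span {X (Fin.last m) ^ (i * t ⌈/⌉ d)} ≤
        weightIdeal K (lastWeight m d t) (d * (i * t ⌈/⌉ d)) :=
      Ideal.span_le.mpr (Set.singleton_subset_iff.mpr (X_pow_mem_weightIdeal (by simp [mul_comm])))
    refine (Ideal.mul_mono (pow_le_weightIdeal Pid_le_weightIdeal _) hspan).trans
      ((weightIdeal_mul_le _ _).trans (antitone_weightIdeal ?_))
    have hceil : i * t ≤ d * (i * t ⌈/⌉ d) := (ceilDiv_le_iff_le_mul hd).mp le_rfl
    have hsplit : (d - i) * t + i * t = t * d := by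
      rw [← Nat.add_mul, Nat.sub_add_cancel (Nat.lt_succ_iff.mp (Finset.mem_range.mp hi)), mul_comm]
    omega
  · rw [weight_lastWeight] at ha
    set s := ∑ i : Fin m, a i.castSucc
    have hterm : monomial a 1 ∈ Pid K m ^ (d - (d - min d s)) *
        Ideal.span {X (Fin.last m) ^ ((d - min d s) * t ⌈/⌉ d)} := by
      rw [Nat.sub_sub_self (min_le_left d s)]
      refine monomial_mem_Pid_pow_mul_span (min_le_right d s) ((ceilDiv_le_iff_le_mul hd).mpr ?_)
      rcases le_total d s with hds | hsd
      · simp [min_eq_left hds]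
      · rw [min_eq_right hsd, Nat.sub_mul]
        have : s * t = t * s := mul_comm s t
        have : d * t = t * d := mul_comm d t
        omega
    exact SetLike.le_def.mp (Finset.le_sup (f := fun i => Pid K m ^ (d - i) *
      Ideal.span {X (Fin.last m) ^ (i * t ⌈/⌉ d)}) (Finset.mem_range.mpr (by omega))) hterm

theorem stmt17_general (K : Type) [Field K] (m : ℕ) (d t : ℕ) (hd : 0 < d) :
    intClo (Ideal.span
        ({f | ∃ i : Fin (m + 1), i ≠ Fin.last m ∧ f = X i ^ d} ∪ {X (Fin.last m) ^ t})) =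
      (↑(Lideal K m d fun i => (i * t + d - 1) / d) :
        Set (MvPolynomial (Fin (m + 1)) K)) :=
  (intClo_paramIdeal hd).trans (congrArg SetLike.coe (Lideal_eq_weightIdeal hd).symm)

/-- the integral closure of `(x_1^d, …, x_{n-1}^d, x_n^t)` equals
`L(P,a)` with `a_i = ⌈it/d⌉`. -/
theorem stmt17 (K : Type) [Field K] (m : ℕ) (d t : ℕ) (hd : 0 < d) (hdt : d ≤ t) :
    intClo (Ideal.span
        ({f | ∃ i : Fin (m + 1), i ≠ Fin.last m ∧ f = X i ^ d} ∪ {X (Fin.last m) ^ t})) =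
      (↑(Lideal K m d fun i => (i * t + d - 1) / d) :
        Set (MvPolynomial (Fin (m + 1)) K)) :=
  stmt17_general K m d t hd

end
end
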